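/- arXiv:1202.1335 — 7 statements merged into one kernel-verified Lean document; each statement's English description precedes it below -/
import Mathlib

section
/- Let U ⊆ ℂ be a nonempty open connected set and let (f_n) be a sequence of analytic functions on U, none of which takes the value 0 anywhere on U. Suppose (f_n) converges to a function f uniformly on every compact subset of U. Then either f is identically 0 on U, or f does not take the value 0 anywhere on U. -/
/-!
Hurwitz's theorem. The limit `f` is holomorphic, so if it is not identically zero its zeros are
isolated: around any `z₀ ∈ U` there is a circle on which `|f| ≥ m > 0`. Once `|F n - f| < m / 2`
on the closed disc, `|F n| ≥ m / 2` on the circle, and since `F n` has no zeros the maximum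
modulus principle applied to `1 / F n` gives `|F n z₀| ≥ m / 2`, hence `f z₀ ≠ 0`.
-/

open Filter Topology Metric Set

theorem Complex.le_norm_of_forall_mem_sphere_le_norm {E : Type*} [NormedAddCommGroup E]
    [NormedSpace ℂ E] [Nontrivial E] {g : E → ℂ} {c : E} {r m : ℝ} (hr : 0 < r)
    (hg : DifferentiableOn ℂ g (closedBall c r)) (hg0 : ∀ z ∈ closedBall c r, g z ≠ 0)
    (hm : ∀ z ∈ sphere c r, m ≤ ‖g z‖) {z : E} (hz : z ∈ closedBall c r) : m ≤ ‖g z‖ := by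
  rcases le_or_gt m 0 with hm0 | hm0
  · exact hm0.trans (norm_nonneg _)
  have hinv : DiffContOnCl ℂ (fun z => (g z)⁻¹) (ball c r) := by
    refine DifferentiableOn.diffContOnCl ?_
    rw [closure_ball c hr.ne']
    exact hg.inv hg0
  have hbound : ∀ z ∈ frontier (ball c r), ‖(g z)⁻¹‖ ≤ m⁻¹ := by
    intro z hz
    rw [frontier_ball c hr.ne'] at hz
    rw [norm_inv]
    exact inv_anti₀ hm0 (hm z hz)
  have hz' : z ∈ closure (ball c r) := by rwa [closure_ball c hr.ne']
  have := Complex.norm_le_of_forall_mem_frontier_norm_le isBounded_ball hinv hbound hz'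
  rw [norm_inv] at this
  exact (inv_le_inv₀ (norm_pos_iff.2 (hg0 z hz)) hm0).1 this

theorem TendstoUniformlyOn.apply_center_ne_zero {ι : Type*} {l : Filter ι} [l.NeBot]
    {F : ι → ℂ → ℂ} {f : ℂ → ℂ} {c : ℂ} {r : ℝ} (hconv : TendstoUniformlyOn F f l (closedBall c r))
    (hr : 0 < r) (hF : ∀ i, DifferentiableOn ℂ (F i) (closedBall c r))
    (hF0 : ∀ i, ∀ z ∈ closedBall c r, F i z ≠ 0) (hf : ∀ z ∈ sphere c r, f z ≠ 0) :
    f c ≠ 0 := by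
  have hfcont : ContinuousOn f (sphere c r) :=
    (hconv.continuousOn (Frequently.of_forall fun i => (hF i).continuousOn)).mono
      sphere_subset_closedBall
  obtain ⟨w, hw, hwmin⟩ := (isCompact_sphere c r).exists_isMinOn
    (NormedSpace.sphere_nonempty.2 hr.le) hfcont.norm
  set m := ‖f w‖
  have hm : 0 < m := norm_pos_iff.2 (hf w hw)
  obtain ⟨i, hi⟩ := (Metric.tendstoUniformlyOn_iff.1 hconv (m / 2) (half_pos hm)).exists
  have hFi : ∀ z ∈ sphere c r, m / 2 ≤ ‖F i z‖ := by
    intro z hz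
    have h1 : m ≤ ‖f z‖ := hwmin hz
    have h2 := hi z (sphere_subset_closedBall hz)
    have h3 := norm_sub_norm_le (f z) (F i z)
    rw [dist_eq_norm] at h2
    linarith
  have hFic := Complex.le_norm_of_forall_mem_sphere_le_norm hr (hF i) (hF0 i) hFi
    (mem_closedBall_self hr.le)
  intro hfc
  have := hi c (mem_closedBall_self hr.le)
  rw [hfc, dist_zero_left] at this
  linarith

theorem AnalyticOnNhd.exists_closedBall_subset_forall_mem_sphere_ne_zero {𝕜 E : Type*}
    [NontriviallyNormedField 𝕜] [NormedAddCommGroup E] [NormedSpace 𝕜 E] {f : 𝕜 → E}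
    {U : Set 𝕜} {z₀ : 𝕜} (hf : AnalyticOnNhd 𝕜 f U) (hU : IsPreconnected U) (hUz₀ : U ∈ 𝓝 z₀)
    (hne : ¬EqOn f 0 U) :
    ∃ r > 0, closedBall z₀ r ⊆ U ∧ ∀ z ∈ sphere z₀ r, f z ≠ 0 := by
  have hiso : ∀ᶠ z in 𝓝[≠] z₀, f z ≠ 0 := not_frequently.1 fun h =>
    hne (hf.eqOn_zero_of_preconnected_of_frequently_eq_zero hU (mem_of_mem_nhds hUz₀) h)
  have hloc : ∀ᶠ z in 𝓝 z₀, z ∈ U ∧ (z ≠ z₀ → f z ≠ 0) :=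
    Filter.Eventually.and hUz₀ (eventually_nhdsWithin_iff.1 hiso)
  obtain ⟨r, hr, hsub⟩ := Metric.nhds_basis_closedBall.mem_iff.1 hloc
  exact ⟨r, hr, fun z hz => (hsub hz).1,
    fun z hz => (hsub (sphere_subset_closedBall hz)).2 (ne_of_mem_sphere hz hr.ne')⟩

theorem stmt_0 (U : Set ℂ) (hUopen : IsOpen U) (hUconn : IsConnected U)
    (F : ℕ → ℂ → ℂ) (f : ℂ → ℂ)
    (hF : ∀ n, AnalyticOnNhd ℂ (F n) U)
    (hFne : ∀ n, ∀ z ∈ U, F n z ≠ 0)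
    (hconv : ∀ K ⊆ U, IsCompact K → TendstoUniformlyOn F f atTop K) :
    (∀ z ∈ U, f z = 0) ∨ (∀ z ∈ U, f z ≠ 0) := by
  have hloc : TendstoLocallyUniformlyOn F f atTop U :=
    (tendstoLocallyUniformlyOn_iff_forall_isCompact hUopen).2 hconv
  have hf : AnalyticOnNhd ℂ f U :=
    (hloc.differentiableOn (Eventually.of_forall fun n => (hF n).differentiableOn)
      hUopen).analyticOnNhd hUopen
  refine or_iff_not_imp_left.2 fun hnz z₀ hz₀ => ?_
  obtain ⟨r, hr, hball, hsphere⟩ :=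
    hf.exists_closedBall_subset_forall_mem_sphere_ne_zero hUconn.isPreconnected
      (hUopen.mem_nhds hz₀) fun h => hnz fun z hz => h hz
  exact (hconv _ hball (isCompact_closedBall z₀ r)).apply_center_ne_zero hr
    (fun n => (hF n).differentiableOn.mono hball) (fun n z hz => hFne n z (hball hz)) hsphere
end

section
/- Let 0 < R ≤ 1, let (ε_n) be a sequence with ε_n ∈ {1,−1} for all n ≥ 1, and let (α_n) be a sequence of complex numbers. Then the partial products ∏_{n=1}^{N} (1+ε_n z^n)^{α_n} converge compactly on the disk |z| < R (as N → ∞) if and only if the power series ∑_{n=1}^{∞} α_n z^n converges for every z with |z| < R; moreover, in that case the power series converges absolutely for every |z| < R. -/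
/-!
Both conditions are equivalent to `R ≤` the radius of convergence of `∑ αₙ zⁿ`.

If the radius is at least `R`, then on a compact subset of `|z| ≤ r < R` the series
`∑ αₙ log (1 + εₙ zⁿ)` is dominated by `(1 - r)⁻¹ ∑ |αₙ| rⁿ`, so the partial products, which are
the exponentials of its partial sums, converge uniformly.

Conversely, the limit `f` of the products is holomorphic with `f 0 = 1`, so its zeros are isolated
and there are radii `r` arbitrarily close to `R` with `f ≠ 0` on `|z| = r`. Uniform convergence on
that circle forces the `n`-th factor `(1 + εₙ zⁿ) ^ αₙ` to lie within `1/2` of `1` there for large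
`n`. As `z` runs over the circle, `εₙ zⁿ` runs over the whole circle of radius `t = rⁿ`, and
`|(1 + w) ^ a - 1| ≤ 1/2` bounds `|Re (a log (1 + w))| ≤ 1`; taking `w = -t` and `w = ± i t`
gives `|αₙ| rⁿ ≤ 3`, so the radius is at least `r`.
-/

open Filter Topology Finset
open Complex Metric ComplexConjugate FormalMultilinearSeries

namespace Finset

@[to_additive sum_Icc_one_eq_sum_range]
lemma prod_Icc_one_eq_prod_range {M : Type*} [CommMonoid M] (f : ℕ → M) (N : ℕ) :
    ∏ n ∈ Icc 1 N, f n = ∏ k ∈ range N, f (k + 1) := by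
  rw [range_eq_Ico, prod_Ico_add' f 0 N 1]
  rfl

end Finset

lemma le_radius_ofScalars_of_forall_tendsto_sum {R : ℝ} {α : ℕ → ℂ}
    (h : ∀ z ∈ ball (0 : ℂ) R, ∃ l, Tendsto (fun N => ∑ n ∈ Icc 1 N, α n * z ^ n) atTop (𝓝 l)) :
    ENNReal.ofReal R ≤ (ofScalars ℂ α).radius := by
  refine ENNReal.le_of_forall_nnreal_lt fun ρ hρ => ?_
  obtain ⟨l, hl⟩ := h ρ (by simpa using ENNReal.coe_lt_ofReal.mp hρ)
  have hl' : Tendsto (fun N => ∑ k ∈ range N, α (k + 1) * (ρ : ℂ) ^ (k + 1)) atTop (𝓝 l) := by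
    simpa only [sum_Icc_one_eq_sum_range] using hl
  have h_terms : Tendsto (fun k => α (k + 1) * (ρ : ℂ) ^ (k + 1)) atTop (𝓝 0) := by
    simpa [sum_range_succ_sub_sum] using (hl'.comp (tendsto_add_atTop_nat 1)).sub hl'
  refine (ofScalars ℂ α).le_radius_of_tendsto (l := 0) ?_
  refine (tendsto_add_atTop_iff_nat 1).mp ?_
  simpa using h_terms.norm

lemma summable_norm_mul_pow_of_le_radius_ofScalars {R : ℝ} {α : ℕ → ℂ}
    (hα : ENNReal.ofReal R ≤ (ofScalars ℂ α).radius) {z : ℂ}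
    (hz : z ∈ ball (0 : ℂ) R) : Summable fun n => ‖α n * z ^ n‖ := by
  have := (ofScalars ℂ α).summable_norm_mul_pow (r := ‖z‖₊)
    ((ENNReal.coe_lt_ofReal.mpr (by simpa using hz)).trans_le hα)
  simpa using this

lemma exists_tendsto_sum_Icc_of_summable_norm {E : Type*} [NormedAddCommGroup E] [CompleteSpace E]
    {u : ℕ → E} (h : Summable fun n => ‖u n‖) :
    ∃ l, Tendsto (fun N => ∑ n ∈ Icc 1 N, u n) atTop (𝓝 l) := by
  simp only [sum_Icc_one_eq_sum_range]
  exact ⟨_, ((summable_nat_add_iff 1).mpr h.of_norm).hasSum.tendsto_sum_nat⟩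

lemma norm_log_one_add_le_of_norm_le {z : ℂ} {r : ℝ} (hz : ‖z‖ ≤ r) (hr : r < 1) :
    ‖log (1 + z)‖ ≤ (1 - r)⁻¹ * ‖z‖ := by
  have hz1 : ‖z‖ < 1 := hz.trans_lt hr
  have h : ‖z‖ ^ 2 * (1 - ‖z‖)⁻¹ / 2 + ‖z‖ ≤ (1 - ‖z‖)⁻¹ * ‖z‖ := by
    have : 0 < 1 - ‖z‖ := by linarith
    field_simp
    nlinarith [norm_nonneg z]
  calc ‖log (1 + z)‖ ≤ (1 - ‖z‖)⁻¹ * ‖z‖ := (norm_log_one_add_le hz1).trans h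
    _ ≤ (1 - r)⁻¹ * ‖z‖ := by gcongr

theorem tendstoUniformlyOn_prod_one_add_cpow {β : Type*} {K : Set β} {w : ℕ → β → ℂ}
    {a : ℕ → ℂ} {u : ℕ → ℝ} {r : ℝ} (hr : r < 1) (hw : ∀ k, ∀ x ∈ K, ‖w k x‖ ≤ r)
    (hu : Summable u) (hwu : ∀ k, ∀ x ∈ K, ‖a k‖ * ‖w k x‖ ≤ u k) :
    TendstoUniformlyOn (fun N x => ∏ k ∈ range N, (1 + w k x) ^ a k)
      (fun x => exp (∑' k, log (1 + w k x) * a k)) atTop K := by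
  have hlog : ∀ k, ∀ x ∈ K, ‖log (1 + w k x) * a k‖ ≤ (1 - r)⁻¹ * u k := fun k x hx => by
    have : 0 ≤ (1 - r)⁻¹ := inv_nonneg.mpr (by linarith)
    calc ‖log (1 + w k x) * a k‖ ≤ (1 - r)⁻¹ * ‖w k x‖ * ‖a k‖ := by
          rw [norm_mul]; gcongr; exact norm_log_one_add_le_of_norm_le (hw k x hx) hr
      _ ≤ (1 - r)⁻¹ * u k := by rw [mul_assoc, mul_comm ‖w k x‖]; gcongr; exact hwu k x hx
  have hbdd : BddAbove ((fun x => (∑' k, log (1 + w k x) * a k).re) '' K) := by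
    refine ⟨∑' k, (1 - r)⁻¹ * u k, Set.forall_mem_image.mpr fun x hx => ?_⟩
    exact (re_le_norm _).trans (tsum_of_norm_bounded (hu.mul_left _).hasSum fun k => hlog k x hx)
  refine ((tendstoUniformlyOn_tsum_nat (hu.mul_left _) hlog).comp_cexp hbdd).congr
    (.of_forall fun N x hx => ?_)
  simp only [Function.comp_apply, exp_sum]
  refine prod_congr rfl fun k _ => (cpow_def_of_ne_zero ?_ _).symm
  exact slitPlane_ne_zero (mem_slitPlane_of_norm_lt_one ((hw k x hx).trans_lt hr))

theorem tendstoLocallyUniformlyOn_prod_of_le_radius_ofScalars {R : ℝ} {ε α : ℕ → ℂ}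
    (hR0 : 0 < R) (hR1 : R ≤ 1) (hε : ∀ n ≥ 1, ‖ε n‖ = 1)
    (hα : ENNReal.ofReal R ≤ (ofScalars ℂ α).radius) :
    TendstoLocallyUniformlyOn (fun N z => ∏ n ∈ Icc 1 N, (1 + ε n * z ^ n) ^ α n)
      (fun z => exp (∑' k, log (1 + ε (k + 1) * z ^ (k + 1)) * α (k + 1))) atTop (ball 0 R) := by
  rw [tendstoLocallyUniformlyOn_iff_forall_isCompact isOpen_ball]
  intro K hK hKc
  obtain ⟨r, ⟨hr0, hrR⟩, hKr⟩ := exists_pos_lt_subset_ball hR0 hKc.isClosed hK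
  have hpow : ∀ k, ∀ z ∈ K, ‖ε (k + 1) * z ^ (k + 1)‖ ≤ r ^ (k + 1) := fun k z hz => by
    rw [norm_mul, norm_pow, hε (k + 1) (by omega), one_mul]
    exact pow_le_pow_left₀ (norm_nonneg z) (mem_ball_zero_iff.mp (hKr hz)).le _
  have hsum : Summable fun k => ‖α (k + 1)‖ * r ^ (k + 1) := by
    lift r to NNReal using hr0.le
    refine (summable_nat_add_iff 1 (f := fun n => ‖α n‖ * (r : ℝ) ^ n)).mpr ?_
    simpa using (ofScalars ℂ α).summable_norm_mul_pow
      ((ENNReal.coe_lt_ofReal.mpr hrR).trans_le hα)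
  have h := tendstoUniformlyOn_prod_one_add_cpow (hrR.trans_le hR1)
    (fun k z hz => (hpow k z hz).trans (pow_le_of_le_one hr0.le (hrR.trans_le hR1).le (by omega)))
    hsum (fun k z hz => by gcongr; exact hpow k z hz)
  simpa only [prod_Icc_one_eq_prod_range] using h

lemma abs_re_le_one_of_norm_exp_sub_one_le {u : ℂ} (h : ‖exp u - 1‖ ≤ 1 / 2) : |u.re| ≤ 1 := by
  have h_le : ‖exp u‖ ≤ 3 / 2 := by linarith [norm_sub_norm_le (exp u) 1, norm_one (α := ℂ)]
  have h_ge : 1 / 2 ≤ ‖exp u‖ := by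
    linarith [norm_sub_norm_le 1 (exp u), norm_one (α := ℂ), norm_sub_rev (exp u) 1]
  rw [norm_exp] at h_le h_ge
  have h_inv : (Real.exp u.re)⁻¹ ≤ 2 := by
    rw [inv_le_comm₀ (Real.exp_pos _) two_pos]; linarith
  rw [abs_le]
  constructor
  · linarith [Real.add_one_le_exp (-u.re), Real.exp_neg u.re]
  · linarith [Real.add_one_le_exp u.re]

lemma div_two_le_arg_one_add_mul_I {t : ℝ} (ht0 : 0 ≤ t) (ht1 : t ≤ 1) :
    t / 2 ≤ arg (1 + t * I) := by
  have hnorm_pos : 0 < ‖1 + t * I‖ := norm_pos_iff.mpr fun h => by simpa using congrArg re h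
  have hnorm : ‖1 + t * I‖ ≤ 2 := by
    calc ‖1 + t * I‖ ≤ ‖(1 : ℂ)‖ + ‖(t : ℂ) * I‖ := norm_add_le _ _
      _ ≤ 2 := by simp [abs_of_nonneg ht0]; linarith
  calc t / 2 ≤ t / ‖1 + t * I‖ := by gcongr
    _ = Real.sin (arg (1 + t * I)) := by rw [sin_arg]; simp
    _ ≤ arg (1 + t * I) := Real.sin_le (arg_nonneg_iff.mpr (by simpa using ht0))

lemma norm_mul_le_of_forall_norm_one_add_cpow_sub_one_le {a : ℂ} {t : ℝ} (ht0 : 0 < t)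
    (ht1 : t < 1) (h : ∀ w : ℂ, ‖w‖ = t → ‖(1 + w) ^ a - 1‖ ≤ 1 / 2) : ‖a‖ * t ≤ 3 := by
  have hre : ∀ w : ℂ, ‖w‖ = t → |(log (1 + w) * a).re| ≤ 1 := fun w hw => by
    have hw0 : 1 + w ≠ 0 := slitPlane_ne_zero (mem_slitPlane_of_norm_lt_one (hw ▸ ht1))
    exact abs_re_le_one_of_norm_exp_sub_one_le (cpow_def_of_ne_zero hw0 a ▸ h w hw)
  have h_re : |a.re| * t ≤ 1 := by
    have h₁ := hre (-t) (by simp [abs_of_pos ht0])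
    rw [show 1 + -(t : ℂ) = ((1 - t : ℝ) : ℂ) by push_cast; ring, ← ofReal_log (by linarith),
      re_ofReal_mul, abs_mul] at h₁
    have : t ≤ |Real.log (1 - t)| := by
      rw [abs_of_neg (Real.log_neg (by linarith) (by linarith))]
      linarith [Real.log_le_sub_one_of_pos (by linarith : 0 < 1 - t)]
    nlinarith [abs_nonneg a.re]
  set x : ℂ := 1 + t * I with hx
  have hx_re : 0 < x.re := by simp [hx]
  have harg : t / 2 ≤ arg x := div_two_le_arg_one_add_mul_I ht0.le ht1.le
  have h_im : arg x * |a.im| ≤ 1 := by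
    have h_plus := hre (t * I) (by simp [abs_of_pos ht0])
    have h_minus := hre (-(t * I)) (by simp [abs_of_pos ht0])
    have hconj : 1 + -((t : ℂ) * I) = conj x := by simp [hx]
    have harg_ne : arg x ≠ Real.pi := by
      rw [Ne, arg_eq_pi_iff]; intro h; linarith [h.1]
    have hdiff : (log (conj x) * a).re - (log x * a).re = 2 * (arg x * a.im) := by
      rw [log_conj x harg_ne]; simp [mul_re, log_im]; ring
    rw [hconj] at h_minus
    have := abs_sub (log (conj x) * a).re (log x * a).re
    rw [hdiff, abs_mul, abs_mul, abs_of_pos (by positivity : (0:ℝ) < 2),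
      abs_of_nonneg (by linarith : 0 ≤ arg x)] at this
    linarith
  calc ‖a‖ * t ≤ (|a.re| + |a.im|) * t := by gcongr; exact norm_le_abs_re_add_abs_im a
    _ ≤ 3 := by nlinarith [abs_nonneg a.im]

lemma exists_norm_eq_and_mul_pow_eq {e w : ℂ} (he : ‖e‖ = 1) {n : ℕ} (hn : n ≠ 0) {r : ℝ}
    (hr : 0 ≤ r) (hw : ‖w‖ = r ^ n) : ∃ y : ℂ, ‖y‖ = r ∧ e * y ^ n = w := by
  have he0 : e ≠ 0 := norm_ne_zero_iff.mp (by simp [he])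
  obtain ⟨y, hy⟩ := IsAlgClosed.exists_pow_nat_eq (w / e) (Nat.pos_of_ne_zero hn)
  refine ⟨y, (pow_left_inj₀ (norm_nonneg y) hr hn).mp ?_, by rw [hy, mul_div_cancel₀ _ he0]⟩
  rw [← norm_pow, hy, norm_div, he, div_one, hw]

lemma tendstoUniformlyOn_one_of_tendstoUniformlyOn_mul {β 𝕜 : Type*} [NormedField 𝕜]
    {P q : ℕ → β → 𝕜} {f : β → 𝕜} {S : Set β} {m : ℝ} (hP : TendstoUniformlyOn P f atTop S)
    (hm : 0 < m) (hfm : ∀ y ∈ S, m ≤ ‖f y‖)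
    (hPq : ∀ N, ∀ y ∈ S, P (N + 1) y = P N y * q (N + 1) y) :
    TendstoUniformlyOn (fun N => q (N + 1)) 1 atTop S := by
  rw [Metric.tendstoUniformlyOn_iff] at hP ⊢
  intro δ hδ
  have hη : 0 < min (m / 2) (m * δ / 4) := by positivity
  filter_upwards [hP _ hη, (tendsto_add_atTop_nat 1).eventually (hP _ hη)] with N hN hN' y hy
  have h₀ := hN y hy
  have h₁ := hN' y hy
  rw [dist_eq_norm] at h₀ h₁
  rw [Pi.one_apply, dist_eq_norm, norm_sub_rev]
  have hPN : m / 2 ≤ ‖P N y‖ := by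
    linarith [norm_sub_norm_le (f y) (P N y), hfm y hy, min_le_left (m / 2) (m * δ / 4)]
  have hdiff : ‖P N y‖ * ‖q (N + 1) y - 1‖ < m * δ / 2 := by
    rw [← norm_mul, mul_sub, mul_one, ← hPq N y hy]
    calc ‖P (N + 1) y - P N y‖ ≤ ‖P (N + 1) y - f y‖ + ‖f y - P N y‖ :=
          norm_sub_le_norm_sub_add_norm_sub _ _ _
      _ < m * δ / 2 := by
          rw [norm_sub_rev (P (N + 1) y)]; linarith [min_le_right (m / 2) (m * δ / 4)]
  by_contra! hq
  nlinarith [norm_nonneg (q (N + 1) y - 1)]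

lemma exists_mem_Ioo_forall_mem_sphere_ne_zero {E : Type*} [NormedAddCommGroup E]
    [NormedSpace ℂ E] {f : ℂ → E} {c : ℂ} {ρ R : ℝ} (hf : AnalyticOnNhd ℂ f (ball c R))
    (hf0 : ¬Set.EqOn f 0 (ball c R)) (hρR : ρ < R) :
    ∃ r ∈ Set.Ioo ρ R, ∀ y ∈ sphere c r, f y ≠ 0 := by
  have h_ne : ∀ᶠ x in codiscreteWithin (ball c R), f x ≠ 0 :=
    (hf.eqOn_zero_or_eventually_ne_zero_of_preconnected
      (convex_ball c R).isPreconnected).resolve_left hf0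
  have h_fin : (closedBall c ((ρ + R) / 2) \ {x | f x ≠ 0}).Finite :=
    (isCompact_closedBall c _).finite_sdiff_of_mem_codiscreteWithin
      (codiscreteWithin_mono (closedBall_subset_ball (by linarith)) h_ne)
  obtain ⟨r, ⟨hρr, hr⟩, hr_zero⟩ :=
    ((Set.Ioo_infinite (by linarith : ρ < (ρ + R) / 2)).sdiff (h_fin.image (dist · c))).nonempty
  refine ⟨r, ⟨hρr, by linarith⟩, fun y hy hfy => hr_zero ⟨y, ⟨?_, not_not_intro hfy⟩, hy⟩⟩
  exact sphere_subset_closedBall.trans (closedBall_subset_closedBall hr.le) hy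

lemma differentiableOn_prod_one_add_mul_pow_cpow {ε α : ℕ → ℂ} (hε : ∀ n ≥ 1, ‖ε n‖ = 1)
    (N : ℕ) :
    DifferentiableOn ℂ (fun z => ∏ n ∈ Icc 1 N, (1 + ε n * z ^ n) ^ α n) (ball 0 1) := by
  intro z hz
  refine DifferentiableAt.differentiableWithinAt (DifferentiableAt.fun_finsetProd fun n hn => ?_)
  have hn : 1 ≤ n := (mem_Icc.mp hn).1
  refine DifferentiableAt.cpow_const (by fun_prop) (mem_slitPlane_of_norm_lt_one ?_)
  rw [mem_ball_zero_iff] at hz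
  simpa [hε n hn] using pow_lt_one₀ (norm_nonneg z) hz (by omega)

lemma eventually_norm_mul_pow_le_of_tendstoUniformlyOn_sphere {ε α : ℕ → ℂ} {f : ℂ → ℂ} {r : ℝ}
    (hr0 : 0 < r) (hr1 : r < 1) (hε : ∀ n ≥ 1, ‖ε n‖ = 1) (hfc : ContinuousOn f (sphere 0 r))
    (hf0 : ∀ y ∈ sphere 0 r, f y ≠ 0)
    (hP : TendstoUniformlyOn (fun N z => ∏ n ∈ Icc 1 N, (1 + ε n * z ^ n) ^ α n) f atTop
      (sphere 0 r)) :
    ∀ᶠ n in atTop, ‖α n‖ * r ^ n ≤ 3 := by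
  obtain ⟨m, hm, hfm⟩ :=
    (isCompact_sphere (0 : ℂ) r).exists_forall_le' hfc.norm (a := 0) (by simpa using hf0)
  have h_factor := tendstoUniformlyOn_one_of_tendstoUniformlyOn_mul
    (q := fun n y => (1 + ε n * y ^ n) ^ α n) hP hm hfm
    (fun N y _ => prod_Icc_succ_top (Nat.le_add_left 1 N) _)
  obtain ⟨N₀, hN₀⟩ := eventually_atTop.mp (Metric.tendstoUniformlyOn_iff.mp h_factor _ one_half_pos)
  filter_upwards [eventually_gt_atTop N₀] with n hn
  obtain ⟨N, rfl⟩ : ∃ N, n = N + 1 := ⟨n - 1, by omega⟩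
  refine norm_mul_le_of_forall_norm_one_add_cpow_sub_one_le (pow_pos hr0 _)
    (pow_lt_one₀ hr0.le hr1 (by omega)) fun w hw => ?_
  obtain ⟨y, hy, rfl⟩ := exists_norm_eq_and_mul_pow_eq (hε (N + 1) (by omega)) (by omega) hr0.le hw
  simpa [dist_eq_norm, norm_sub_rev] using (hN₀ N (by omega) y (by simpa using hy)).le

theorem le_radius_ofScalars_of_tendstoLocallyUniformlyOn_prod {R : ℝ} {ε α : ℕ → ℂ} {f : ℂ → ℂ}
    (hR0 : 0 < R) (hR1 : R ≤ 1) (hε : ∀ n ≥ 1, ‖ε n‖ = 1)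
    (hf : TendstoLocallyUniformlyOn (fun N z => ∏ n ∈ Icc 1 N, (1 + ε n * z ^ n) ^ α n) f atTop
      (ball 0 R)) :
    ENNReal.ofReal R ≤ (ofScalars ℂ α).radius := by
  have hfd : DifferentiableOn ℂ f (ball 0 R) := hf.differentiableOn
    (.of_forall fun N => (differentiableOn_prod_one_add_mul_pow_cpow hε N).mono
      (ball_subset_ball hR1)) isOpen_ball
  have hf0 : f 0 = 1 := by
    refine tendsto_nhds_unique (hf.tendsto_at (mem_ball_self hR0))
      (tendsto_const_nhds.congr fun N => ?_)
    refine (prod_eq_one fun n hn => ?_).symm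
    simp [zero_pow (by simp at hn; omega : n ≠ 0)]
  refine ENNReal.le_of_forall_nnreal_lt fun ρ hρ => ?_
  obtain ⟨r, ⟨hρr, hrR⟩, hfr⟩ := exists_mem_Ioo_forall_mem_sphere_ne_zero
    (hfd.analyticOnNhd isOpen_ball) (fun h => by simpa [hf0] using h (mem_ball_self hR0))
    (ENNReal.coe_lt_ofReal.mp hρ)
  have hr0 : 0 < r := ρ.2.trans_lt hρr
  have hsphere : sphere (0 : ℂ) r ⊆ ball 0 R := sphere_subset_ball hrR
  have hbound := eventually_norm_mul_pow_le_of_tendstoUniformlyOn_sphere hr0 (hrR.trans_le hR1) hε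
    (hfd.continuousOn.mono hsphere) (by simpa using hfr)
    ((tendstoLocallyUniformlyOn_iff_forall_isCompact isOpen_ball).mp hf _ hsphere
      (isCompact_sphere 0 r))
  lift r to NNReal using hr0.le
  calc (ρ : ENNReal) ≤ r := by exact_mod_cast hρr.le
    _ ≤ _ := le_radius_of_eventually_le _ 3 (by simpa using hbound)

theorem stmt_1 (R : ℝ) (hR0 : 0 < R) (hR1 : R ≤ 1)
    (ε : ℕ → ℂ) (hε : ∀ n ≥ 1, ε n = 1 ∨ ε n = -1) (α : ℕ → ℂ) :
    ((∃ f : ℂ → ℂ, ∀ K ⊆ Metric.ball (0 : ℂ) R, IsCompact K →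
        TendstoUniformlyOn
          (fun N z => ∏ n ∈ Finset.Icc 1 N, (1 + ε n * z ^ n) ^ (α n)) f atTop K) ↔
      (∀ z ∈ Metric.ball (0 : ℂ) R,
        ∃ l : ℂ, Tendsto (fun N => ∑ n ∈ Finset.Icc 1 N, α n * z ^ n) atTop (𝓝 l)))
    ∧
    ((∃ f : ℂ → ℂ, ∀ K ⊆ Metric.ball (0 : ℂ) R, IsCompact K →
        TendstoUniformlyOn
          (fun N z => ∏ n ∈ Finset.Icc 1 N, (1 + ε n * z ^ n) ^ (α n)) f atTop K) →
      ∀ z ∈ Metric.ball (0 : ℂ) R, Summable (fun n => ‖α n * z ^ n‖)) := by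
  have hε' : ∀ n ≥ 1, ‖ε n‖ = 1 := fun n hn => by rcases hε n hn with h | h <;> simp [h]
  have h_prod : (∃ f : ℂ → ℂ, ∀ K ⊆ ball (0 : ℂ) R, IsCompact K →
      TendstoUniformlyOn (fun N z => ∏ n ∈ Icc 1 N, (1 + ε n * z ^ n) ^ (α n)) f atTop K) ↔
      ENNReal.ofReal R ≤ (ofScalars ℂ α).radius := by
    simp_rw [← tendstoLocallyUniformlyOn_iff_forall_isCompact isOpen_ball]
    exact ⟨fun ⟨_, hf⟩ => le_radius_ofScalars_of_tendstoLocallyUniformlyOn_prod hR0 hR1 hε' hf,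
      fun hα => ⟨_, tendstoLocallyUniformlyOn_prod_of_le_radius_ofScalars hR0 hR1 hε' hα⟩⟩
  have h_sum : (∀ z ∈ ball (0 : ℂ) R,
      ∃ l : ℂ, Tendsto (fun N => ∑ n ∈ Icc 1 N, α n * z ^ n) atTop (𝓝 l)) ↔
      ENNReal.ofReal R ≤ (ofScalars ℂ α).radius :=
    ⟨le_radius_ofScalars_of_forall_tendsto_sum, fun hα z hz =>
      exists_tendsto_sum_Icc_of_summable_norm (summable_norm_mul_pow_of_le_radius_ofScalars hα hz)⟩
  exact ⟨h_prod.trans h_sum.symm,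
    fun h z hz => summable_norm_mul_pow_of_le_radius_ofScalars (h_prod.mp h) hz⟩
end

section
/- Let (ε_n) be a sequence with ε_n ∈ {1,−1}, let (α_n) be a sequence of complex numbers, and define a sequence (b_n) of complex numbers by b_n = ∑ C(α_1,k_1)·C(α_2,k_2)···C(α_n,k_n)·ε_1^{k_1}·ε_2^{k_2}···ε_n^{k_n}, the sum extending over all tuples (k_1,…,k_n) of non-negative integers with k_1 + 2k_2 + ⋯ + n·k_n = n. Then b_n is an integer for every n ≥ 1 if and only if α_n is an integer for every n ≥ 1. -/
/-!
The summand of `b n` is `∏ i, C(α (i+1), κ i) ε (i+1) ^ κ i`. The only tuple `κ` of weight `n`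
that charges the last part is the one with `κ (n-1) = 1` and all other entries `0`; it contributes
`α n ε n`. Every other summand only involves `α 1, …, α (n-1)`, so by strong induction
`b n - α n ε n` is an integer once `α 1, …, α (n-1)` are, and `ε n = ±1` then makes `α n` an
integer. Conversely, `C(m, k)` is an integer for integer `m`.
-/

open Finset

theorem choose_eq_prod_range_div_factorial {K : Type*} [Field K] [CharZero K] (x : K) (k : ℕ) :
    Ring.choose x k = (∏ j ∈ range k, (x - j)) / k.factorial := by
  rw [Ring.choose_eq_smul, ← Polynomial.aeval_eq_smeval, ← Polynomial.eval_map_algebraMap,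
    descPochhammer_map, descPochhammer_eval_eq_prod_range, smul_eq_mul,
    inv_mul_eq_div]

theorem exists_intCast_eq_iff_mem_bot {R : Type*} [Ring R] {x : R} :
    (∃ m : ℤ, x = m) ↔ x ∈ (⊥ : Subring R) := by
  simp only [Subring.mem_bot, eq_comm]

theorem choose_mem_bot {R : Type*} [Ring R] [BinomialRing R] {x : R} (hx : x ∈ (⊥ : Subring R))
    (k : ℕ) : Ring.choose x k ∈ (⊥ : Subring R) := by
  obtain ⟨m, rfl⟩ := Subring.mem_bot.1 hx
  exact Subring.mem_bot.2 ⟨Ring.choose m k, by simpa using Ring.map_choose (Int.castRingHom R) m k⟩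

section PartitionSum

variable {R : Type*} [CommRing R]

/-- `κ i` is the multiplicity of the part `i + 1` in a partition of `n`. -/
def partitionSum (f : ℕ → ℕ → R) (n : ℕ) : R :=
  ∑ κ ∈ univ.filter (fun κ : Fin n → Fin (n + 1) => ∑ i : Fin n, (i.1 + 1) * (κ i).1 = n),
    ∏ i : Fin n, f (i.1 + 1) (κ i).1

theorem eq_single_last_of_weight_eq {m : ℕ} {κ : Fin (m + 1) → Fin (m + 2)}
    (hκ : ∑ i : Fin (m + 1), (i.1 + 1) * (κ i).1 = m + 1) (hlast : (κ (Fin.last m)).1 ≠ 0) :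
    κ = Pi.single (Fin.last m) 1 := by
  rw [Fin.sum_univ_castSucc, Fin.val_last] at hκ
  have hone : (κ (Fin.last m)).1 = 1 := by
    have : (m + 1) * (κ (Fin.last m)).1 ≤ (m + 1) * 1 := by omega
    have := Nat.le_of_mul_le_mul_left this m.succ_pos
    omega
  have hrest : ∀ i : Fin m, (κ i.castSucc).1 = 0 := by
    have hzero : ∑ i : Fin m, (i.castSucc.1 + 1) * (κ i.castSucc).1 = 0 := by
      rw [hone] at hκ; omega
    intro i
    simpa using (sum_eq_zero_iff.1 hzero) i (mem_univ i)
  funext i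
  induction i using Fin.lastCases with
  | last => exact Fin.ext (by simp [hone])
  | cast i => exact Fin.ext (by simp [hrest i, (Fin.castSucc_lt_last i).ne])

theorem partitionSum_mem {A : Subring R} {f : ℕ → ℕ → R} {n : ℕ}
    (hf : ∀ i, 1 ≤ i → i ≤ n → ∀ k, f i k ∈ A) : partitionSum f n ∈ A :=
  sum_mem fun _ _ => prod_mem fun _ _ => hf _ (by omega) (by omega) _

theorem partitionSum_sub_mem {A : Subring R} {f : ℕ → ℕ → R} {m : ℕ} (hf₀ : ∀ i, f i 0 = 1)
    (hf : ∀ i, 1 ≤ i → i ≤ m → ∀ k, f i k ∈ A) :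
    partitionSum f (m + 1) - f (m + 1) 1 ∈ A := by
  set κ₀ : Fin (m + 1) → Fin (m + 2) := Pi.single (Fin.last m) 1
  have hκ₀ : ∑ i : Fin (m + 1), (i.1 + 1) * (κ₀ i).1 = m + 1 := by
    rw [Fintype.sum_eq_single (Fin.last m) fun i hi => by simp [κ₀, hi]]
    simp [κ₀]
  have hterm₀ : ∏ i : Fin (m + 1), f (i.1 + 1) (κ₀ i).1 = f (m + 1) 1 := by
    rw [Fintype.prod_eq_single (Fin.last m) fun i hi => by simp [κ₀, hi, hf₀]]
    simp [κ₀]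
  rw [partitionSum, ← add_sum_erase _ _ (mem_filter.2 ⟨mem_univ κ₀, hκ₀⟩), hterm₀,
    add_sub_cancel_left]
  refine sum_mem fun κ hκ => prod_mem fun i _ => ?_
  obtain ⟨hne, hκ⟩ := mem_erase.1 hκ
  have hlast : (κ (Fin.last m)).1 = 0 := by
    by_contra h
    exact hne (eq_single_last_of_weight_eq (mem_filter.1 hκ).2 h)
  induction i using Fin.lastCases with
  | last => simp [hlast, hf₀, one_mem]
  | cast i => exact hf _ (by omega) (by simp) _

end PartitionSum

theorem stmt_5 (ε : ℕ → ℂ) (hε : ∀ n ≥ 1, ε n = 1 ∨ ε n = -1)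
    (α : ℕ → ℂ) (b : ℕ → ℂ)
    (hb : ∀ n ≥ 1, b n =
      ∑ κ ∈ Finset.univ.filter
          (fun κ : Fin n → Fin (n + 1) => ∑ i : Fin n, (i.1 + 1) * (κ i).1 = n),
        ∏ i : Fin n,
          ((∏ j ∈ Finset.range (κ i).1, (α (i.1 + 1) - (j : ℂ))) / (Nat.factorial (κ i).1)
            * ε (i.1 + 1) ^ (κ i).1)) :
    (∀ n ≥ 1, ∃ m : ℤ, b n = (m : ℂ)) ↔ (∀ n ≥ 1, ∃ m : ℤ, α n = (m : ℂ)) := by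
  set f : ℕ → ℕ → ℂ := fun i k => Ring.choose (α i) k * ε i ^ k
  have hb' : ∀ n ≥ 1, b n = partitionSum f n := fun n hn => by
    simp only [hb n hn, partitionSum, f, choose_eq_prod_range_div_factorial]
  have hε' : ∀ n ≥ 1, ε n ∈ (⊥ : Subring ℂ) := fun n hn => by
    rcases hε n hn with h | h <;> simp [h, one_mem]
  have hf : ∀ m, (∀ i, 1 ≤ i → i ≤ m → α i ∈ (⊥ : Subring ℂ)) →
      ∀ i, 1 ≤ i → i ≤ m → ∀ k, f i k ∈ (⊥ : Subring ℂ) := fun m hα i h1 h2 k =>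
    mul_mem (choose_mem_bot (hα i h1 h2) k) (pow_mem (hε' i h1) k)
  simp only [exists_intCast_eq_iff_mem_bot]
  constructor
  · intro hB n
    induction n using Nat.strong_induction_on with | _ n ih => ?_
    intro hn
    obtain ⟨m, rfl⟩ := Nat.exists_eq_add_one.2 hn
    have hlower := partitionSum_sub_mem (A := ⊥) (fun i => by simp [f])
      (hf m fun i h1 _ => ih i (by omega) h1)
    have hαε : α (m + 1) * ε (m + 1) ∈ (⊥ : Subring ℂ) := by
      simpa [f, hb' _ hn] using sub_mem (hB _ hn) hlower
    rcases hε _ hn with h | h <;> simpa [h] using hαε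
  · intro hα n hn
    rw [hb' n hn]
    exact partitionSum_mem (hf n fun i h1 _ => hα i h1)
end

section
/- Let (g_n)_{n≥1} be a sequence of complex numbers, let (ε_n) be a sequence with ε_n ∈ {1,−1}, and let (α_n) be the unique sequence of complex numbers satisfying −g_n = ∑_{d | n} d·α_d·(−ε_d)^{n/d−1} for every n ≥ 1. Then |α_n| ≤ n·∑_{k=1}^{n} |g_k| for every n ≥ 1. -/
/-!
Isolating the term `d = n` of the defining relation gives
`n ‖α n‖ ≤ ‖g n‖ + ∑_{d ∣ n, d < n} d ‖α d‖`. By strong induction `‖α d‖ ≤ d T n` for the proper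
divisors, where `T n = ∑_{k ≤ n} ‖g k‖`, so it suffices that `∑_{d ∣ n, d < n} d² ≤ n² - n`.
Writing `d = n / e` with `2 ≤ e ≤ n`, this follows from `∑_{e=2}^{n} 1/e² ≤ 1 - 1/n`.
-/

open Finset

theorem sum_inv_sq_divisors_le (n : ℕ) (hn : n ≠ 0) :
    ∑ e ∈ n.divisors, ((e : ℝ) ^ 2)⁻¹ ≤ 2 - (n : ℝ)⁻¹ := by
  have hn1 : 1 ≤ n := Nat.one_le_iff_ne_zero.2 hn
  have hsub : n.divisors ⊆ Ioc 0 n := fun e he =>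
    mem_Ioc.2 ⟨Nat.pos_of_mem_divisors he, Nat.divisor_le he⟩
  calc ∑ e ∈ n.divisors, ((e : ℝ) ^ 2)⁻¹
      ≤ ∑ e ∈ Ioc 0 n, ((e : ℝ) ^ 2)⁻¹ :=
        sum_le_sum_of_subset_of_nonneg hsub fun _ _ _ => by positivity
    _ = 1 + ∑ e ∈ Ioc 1 n, ((e : ℝ) ^ 2)⁻¹ := by
        rw [← sum_Ioc_consecutive _ zero_le_one hn1]
        simp [show Ioc 0 1 = {1} from rfl]
    _ ≤ 1 + (1 - (n : ℝ)⁻¹) := by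
        gcongr
        simpa using sum_Ioc_inv_sq_le_sub (α := ℝ) one_ne_zero hn1
    _ = 2 - (n : ℝ)⁻¹ := by ring

theorem sum_properDivisors_sq_le (n : ℕ) :
    ∑ d ∈ n.properDivisors, (d : ℝ) ^ 2 ≤ (n : ℝ) ^ 2 - n := by
  rcases eq_or_ne n 0 with rfl | hn
  · simp
  have hn0 : (n : ℝ) ≠ 0 := by exact_mod_cast hn
  have hdiv : ∑ d ∈ n.divisors, (d : ℝ) ^ 2 = (n : ℝ) ^ 2 * ∑ e ∈ n.divisors, ((e : ℝ) ^ 2)⁻¹ := by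
    rw [← Nat.sum_div_divisors, mul_sum]
    refine sum_congr rfl fun e he => ?_
    have he0 : (e : ℝ) ≠ 0 := by exact_mod_cast (Nat.pos_of_mem_divisors he).ne'
    rw [Nat.cast_div (Nat.dvd_of_mem_divisors he) he0]
    field_simp
  have hsplit : ∑ d ∈ n.divisors, (d : ℝ) ^ 2 = n ^ 2 + ∑ d ∈ n.properDivisors, (d : ℝ) ^ 2 := by
    rw [← Nat.cons_self_properDivisors hn, sum_cons]
  have hbound : (n : ℝ) ^ 2 * (2 - (n : ℝ)⁻¹) = 2 * n ^ 2 - n := by field_simp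
  have := mul_le_mul_of_nonneg_left (sum_inv_sq_divisors_le n hn) (sq_nonneg (n : ℝ))
  linarith

theorem le_mul_of_mul_le_add_sum_properDivisors {a T : ℕ → ℝ} (hT : Monotone T)
    (hT0 : ∀ n, 0 ≤ T n) (ha : ∀ n ≥ 1, n * a n ≤ T n + ∑ d ∈ n.properDivisors, d * a d) :
    ∀ n ≥ 1, a n ≤ n * T n := by
  intro n
  induction n using Nat.strong_induction_on with
  | _ n ih =>
  intro hn
  have hn1 : (1 : ℝ) ≤ n := by exact_mod_cast hn
  have hterm : ∀ d ∈ n.properDivisors, (d : ℝ) * a d ≤ (d : ℝ) ^ 2 * T n := by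
    intro d hd
    obtain ⟨hdvd, hlt⟩ := Nat.mem_properDivisors.1 hd
    have hd1 : 1 ≤ d := Nat.pos_of_dvd_of_pos hdvd hn
    calc (d : ℝ) * a d ≤ d * (d * T d) := by gcongr; exact ih d hlt hd1
      _ ≤ (d : ℝ) ^ 2 * T n := by rw [← mul_assoc, ← sq]; gcongr; exact hT hlt.le
  have hmul : (n : ℝ) * a n ≤ n * (n * T n) :=
    calc (n : ℝ) * a n ≤ T n + ∑ d ∈ n.properDivisors, (d : ℝ) ^ 2 * T n :=
          (ha n hn).trans (add_le_add_right (sum_le_sum hterm) _)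
      _ ≤ T n + ((n : ℝ) ^ 2 - n) * T n := by
          rw [← sum_mul]
          linarith [mul_le_mul_of_nonneg_right (sum_properDivisors_sq_le n) (hT0 n)]
      _ ≤ n * (n * T n) := by nlinarith [mul_nonneg (sub_nonneg.2 hn1) (hT0 n)]
  exact le_of_mul_le_mul_left hmul (by linarith)

theorem natCast_mul_norm_le_of_neg_eq_sum_divisors {𝕜 : Type*} [RCLike 𝕜] {g ε α : ℕ → 𝕜} {n : ℕ} (hn : n ≠ 0)
    (hε : ∀ d ∈ n.properDivisors, ‖ε d‖ ≤ 1)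
    (hα : -g n = ∑ d ∈ n.divisors, (d : 𝕜) * α d * (-ε d) ^ (n / d - 1)) :
    n * ‖α n‖ ≤ ‖g n‖ + ∑ d ∈ n.properDivisors, d * ‖α d‖ := by
  rw [← Nat.cons_self_properDivisors hn, sum_cons, Nat.div_self (Nat.pos_of_ne_zero hn),
    Nat.sub_self, pow_zero, mul_one] at hα
  have hsolve : (n : 𝕜) * α n
      = -(g n + ∑ d ∈ n.properDivisors, (d : 𝕜) * α d * (-ε d) ^ (n / d - 1)) := by
    linear_combination -hα
  calc (n : ℝ) * ‖α n‖ = ‖(n : 𝕜) * α n‖ := by rw [norm_mul, RCLike.norm_natCast]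
    _ ≤ ‖g n‖ + ∑ d ∈ n.properDivisors, ‖(d : 𝕜) * α d * (-ε d) ^ (n / d - 1)‖ := by
        rw [hsolve, norm_neg]
        exact (norm_add_le _ _).trans (by gcongr; exact norm_sum_le _ _)
    _ ≤ ‖g n‖ + ∑ d ∈ n.properDivisors, d * ‖α d‖ := by
        gcongr with d hd
        rw [norm_mul, norm_mul, norm_pow, norm_neg, RCLike.norm_natCast]
        exact mul_le_of_le_one_right (by positivity) (pow_le_one₀ (norm_nonneg _) (hε d hd))

theorem stmt_9 (g : ℕ → ℂ) (ε : ℕ → ℂ) (hε : ∀ n ≥ 1, ε n = 1 ∨ ε n = -1)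
    (α : ℕ → ℂ)
    (hα : ∀ n ≥ 1, -g n = ∑ d ∈ Nat.divisors n, (d : ℂ) * α d * (-ε d) ^ (n / d - 1)) :
    ∀ n ≥ 1, ‖α n‖ ≤ n * ∑ k ∈ Finset.Icc 1 n, ‖g k‖ := by
  refine le_mul_of_mul_le_add_sum_properDivisors
    (fun m n hmn => sum_le_sum_of_subset_of_nonneg (Icc_subset_Icc_right hmn)
      fun _ _ _ => norm_nonneg _)
    (fun n => sum_nonneg fun _ _ => norm_nonneg _) fun n hn => ?_
  have hgn : ‖g n‖ ≤ ∑ k ∈ Icc 1 n, ‖g k‖ :=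
    single_le_sum (fun _ _ => norm_nonneg _) (mem_Icc.2 ⟨hn, le_rfl⟩)
  have hε' : ∀ d ∈ n.properDivisors, ‖ε d‖ ≤ 1 := fun d hd => by
    rcases hε d (Nat.pos_of_mem_properDivisors hd) with h | h <;> simp [h]
  linarith [natCast_mul_norm_le_of_neg_eq_sum_divisors (Nat.one_le_iff_ne_zero.1 hn) hε' (hα n hn)]
end

section
/- For every z ∈ ℂ with |z| < 1, the partial products ∏_{n=1}^{N} (1−z^n)^{μ(n)/n} converge as N → ∞ to e^{−z}, where μ is the Möbius function; that is, e^{−z} = ∏_{n=1}^{∞} (1−z^n)^{μ(n)/n}. -/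
open Filter Topology Finset ArithmeticFunction
open ArithmeticFunction.Moebius

/-!
The logarithm of the partial product is `∑ μ(n)/n · log(1 - zⁿ) = -∑ₙ ∑ₘ μ(n) z^(nm)/(nm)`.
For `‖z‖ < 1` this double series converges absolutely, so it may be regrouped along the
hyperbolas `nm = k`, giving `-∑ₖ (∑_{d ∣ k} μ(d)) zᵏ/k = -z` since `∑_{d ∣ k} μ(d) = [k = 1]`.
Exponentiating and using continuity of `exp` gives the product.
-/

theorem HasSum.sum_divisorsAntidiagonal {α : Type*} [AddCommGroup α] [UniformSpace α]
    [IsUniformAddGroup α] [CompleteSpace α] [T0Space α] {f : ℕ × ℕ → α} {a : α}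
    (hf : HasSum f a) (hf₀ : ∀ p : ℕ × ℕ, p.1 * p.2 = 0 → f p = 0) :
    HasSum (fun k : ℕ => ∑ p ∈ k.divisorsAntidiagonal, f p) a := by
  convert hf.tsum_fiberwise (fun p => p.1 * p.2) with k
  rcases eq_or_ne k 0 with rfl | hk
  · have : ∀ p : (fun p : ℕ × ℕ => p.1 * p.2) ⁻¹' {0}, f p = 0 := fun p => hf₀ p p.2
    simp [this]
  · rw [show (fun p : ℕ × ℕ => p.1 * p.2) ⁻¹' {k} = k.divisorsAntidiagonal by ext; simp [hk],
      Finset.tsum_subtype' k.divisorsAntidiagonal f]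

theorem HasSum.tendsto_sum_Icc_one {M : Type*} [AddCommMonoid M] [TopologicalSpace M]
    {f : ℕ → M} {a : M} (hf : HasSum f a) (hf₀ : f 0 = 0) :
    Tendsto (fun N => ∑ n ∈ Icc 1 N, f n) atTop (𝓝 a) := by
  have h (N : ℕ) : ∑ n ∈ range (N + 1), f n = ∑ n ∈ Icc 1 N, f n := by
    rw [Nat.range_succ_eq_Icc_zero, Icc_eq_cons_Ioc N.zero_le, sum_cons, hf₀, _root_.zero_add,
      ← Icc_add_one_left_eq_Ioc, Nat.zero_add]
  exact (hf.tendsto_sum_nat.comp (tendsto_add_atTop_nat 1)).congr h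

theorem sum_divisors_moebius {R : Type*} [Ring R] (k : ℕ) :
    ∑ d ∈ k.divisors, (μ d : R) = if k = 1 then 1 else 0 := by
  rw [← one_apply, ← coe_moebius_mul_coe_zeta, coe_mul_zeta_apply]
  simp

section LambertSeries

variable {a : ℕ → ℂ} {C : ℝ} {z : ℂ}

theorem one_sub_pow_ne_zero (hz : ‖z‖ < 1) {n : ℕ} (hn : n ≠ 0) : 1 - z ^ n ≠ 0 :=
  sub_ne_zero.2 fun h =>
    (pow_lt_one₀ (norm_nonneg z) hz hn).ne (by simpa using congrArg norm h.symm)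

theorem summable_mul_pow_mul_div (ha : ∀ n, ‖a n‖ ≤ C) (hz : ‖z‖ < 1) :
    Summable fun p : ℕ × ℕ => a p.1 * z ^ (p.1 * p.2) / (p.1 * p.2 : ℕ) := by
  have hmaj : Summable fun c : ℕ+ × ℕ+ => C * ‖z‖ ^ (c.1 * c.2 : ℕ) := by
    simpa using (summable_prod_mul_pow 0 (r := ‖z‖) (by simpa)).mul_left C
  have hinj : Function.Injective (Prod.map ((↑) : ℕ+ → ℕ) ((↑) : ℕ+ → ℕ)) :=
    PNat.coe_injective.prodMap PNat.coe_injective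
  rw [← hinj.summable_iff]
  · refine Summable.of_norm_bounded hmaj fun ⟨n, m⟩ => ?_
    have hnm : (1 : ℝ) ≤ ((n * m : ℕ) : ℝ) := by exact_mod_cast (n * m).pos
    calc ‖a n * z ^ (n * m : ℕ) / ((n * m : ℕ) : ℂ)‖
        = ‖a n‖ * ‖z‖ ^ (n * m : ℕ) / ((n * m : ℕ) : ℝ) := by
          rw [norm_div, norm_mul, norm_pow, Complex.norm_natCast]
      _ ≤ ‖a n‖ * ‖z‖ ^ (n * m : ℕ) := div_le_self (by positivity) hnm
      _ ≤ C * ‖z‖ ^ (n * m : ℕ) := by gcongr; exact ha n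
  · rintro ⟨n, m⟩ hp
    contrapose! hp
    have hn : n ≠ 0 := by rintro rfl; simp at hp
    have hm : m ≠ 0 := by rintro rfl; simp at hp
    exact ⟨(⟨n, n.pos_of_ne_zero hn⟩, ⟨m, m.pos_of_ne_zero hm⟩), rfl⟩

theorem hasSum_div_mul_log_one_sub_pow (ha : ∀ n, ‖a n‖ ≤ C) (hz : ‖z‖ < 1) :
    HasSum (fun n : ℕ => a n / n * Complex.log (1 - z ^ n))
      (-∑' k : ℕ, (∑ d ∈ k.divisors, a d) * z ^ k / k) := by
  obtain ⟨T, hT⟩ := summable_mul_pow_mul_div ha hz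
  -- the terms with `n * m = 0` vanish because of the division by zero
  have hdiag : HasSum (fun k : ℕ => (∑ d ∈ k.divisors, a d) * z ^ k / k) T := by
    refine (hT.sum_divisorsAntidiagonal fun p hp => by simp [hp]).congr_fun fun k => ?_
    rw [← Nat.sum_divisorsAntidiagonal (fun d _ => a d), sum_mul, sum_div]
    refine sum_congr rfl fun p hp => ?_
    rw [(Nat.mem_divisorsAntidiagonal.1 hp).1]
  have hrow (n : ℕ) : HasSum (fun m => a n * z ^ (n * m) / (n * m : ℕ))
      (-(a n / n * Complex.log (1 - z ^ n))) := by
    rcases n.eq_zero_or_pos with rfl | hn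
    · simp
    have hzn : ‖z ^ n‖ < 1 := by simpa using pow_lt_one₀ (norm_nonneg z) hz hn.ne'
    rw [← mul_neg]
    refine ((Complex.hasSum_taylorSeries_neg_log hzn).mul_left (a n / n)).congr_fun fun m => ?_
    rw [div_mul_div_comm, pow_mul, Nat.cast_mul]
  simpa only [hdiag.tsum_eq, neg_neg] using (hT.prod_fiberwise hrow).neg

theorem hasSum_moebius_div_mul_log_one_sub_pow (hz : ‖z‖ < 1) :
    HasSum (fun n : ℕ => (μ n : ℂ) / n * Complex.log (1 - z ^ n)) (-z) := by
  have hμ (n : ℕ) : ‖(μ n : ℂ)‖ ≤ 1 := by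
    rw [Complex.norm_intCast]
    exact_mod_cast abs_moebius_le_one
  simpa [sum_divisors_moebius, ite_div] using hasSum_div_mul_log_one_sub_pow hμ hz

end LambertSeries

theorem stmt_14 (z : ℂ) (hz : ‖z‖ < 1) :
    Tendsto (fun N => ∏ n ∈ Finset.Icc 1 N, (1 - z ^ n) ^ ((μ n : ℂ) / n)) atTop
      (𝓝 (Complex.exp (-z))) := by
  have hprod (N : ℕ) : ∏ n ∈ Icc 1 N, (1 - z ^ n) ^ ((μ n : ℂ) / n) =
      Complex.exp (∑ n ∈ Icc 1 N, (μ n : ℂ) / n * Complex.log (1 - z ^ n)) := by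
    rw [Complex.exp_sum]
    refine prod_congr rfl fun n hn => ?_
    have hn₀ : n ≠ 0 := Nat.one_le_iff_ne_zero.1 (mem_Icc.1 hn).1
    rw [Complex.cpow_def_of_ne_zero (one_sub_pow_ne_zero hz hn₀), mul_comm]
  simp_rw [hprod]
  exact (Complex.continuous_exp.tendsto _).comp
    ((hasSum_moebius_div_mul_log_one_sub_pow hz).tendsto_sum_Icc_one (by simp))
end

section
/- Let q be a monic polynomial of degree k with integer coefficients, and let x_1, …, x_k ∈ ℂ be its roots listed with multiplicity, so that q(x) = (x−x_1)(x−x_2)⋯(x−x_k) over ℂ. For each n ≥ 1 set q_n = x_1^n + x_2^n + ⋯ + x_k^n. Then for every n ≥ 1 there exists an integer t such that ∑_{d | n} q_d·μ(n/d) = n·t, where μ is the Möbius function; that is, ∑_{d | n} q_d·μ(n/d) ≡ 0 (mod n). -/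
/-!
The power sums `q_n = ∑ xᵢⁿ` are the images of the symmetric polynomials `psum n` under a ring
homomorphism `ev` from the ring `Λ` of symmetric polynomials over `ℤ` to `ℤ`: by Vieta the
elementary symmetric polynomials evaluate to the coefficients of `q` up to sign, and they generate
`Λ` freely. The substitution `ψ : Xᵢ ↦ Xᵢ ^ p` is an endomorphism of `Λ` lifting Frobenius,
`ψ s ≡ s ^ p (mod p)`, with `ψ^[e] (psum c) = psum (p ^ e * c)`. Together with Fermat's little
theorem in `ℤ` and the fact that `a ≡ b (mod p ^ e)` implies `a ^ p ≡ b ^ p (mod p ^ (e + 1))`,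
this gives `q_{p^(e+1) c} ≡ q_{p^e c} (mod p ^ (e + 1))`. For `n = p ^ e * m` with `p ∤ m` the
Möbius sum `∑_{d ∣ n} q_d μ(n/d)` collapses to `∑_{j ∣ m} μ(m/j) (q_{p^e j} - q_{p^(e-1) j})`,
so every prime power dividing `n` divides it.
-/

open Finset Polynomial ArithmeticFunction
open scoped ArithmeticFunction.Moebius

theorem pow_succ_dvd_pow_sub_pow {R : Type*} [CommRing R] {p e : ℕ} {a b : R} (he : e ≠ 0)
    (h : (p : R) ^ e ∣ a - b) : (p : R) ^ (e + 1) ∣ a ^ p - b ^ p := by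
  rw [← geom_sum₂_mul, pow_succ']
  exact mul_dvd_mul (dvd_geom_sum₂_self ((dvd_pow_self _ he).trans h)) h

theorem pow_succ_dvd_iterate_sub_iterate {R : Type*} [CommRing R] {p : ℕ} (hp : p.Prime)
    (φ : R →+* R) (hφ : ∀ s, (p : R) ∣ φ s - s ^ p) (ev : R →+* ℤ) (e : ℕ) (s : R) :
    (p : ℤ) ^ (e + 1) ∣ ev (φ^[e + 1] s) - ev (φ^[e] s) := by
  induction e generalizing s with
  | zero =>
    have hlift : (p : ℤ) ∣ ev (φ s) - ev s ^ p := by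
      simpa only [map_sub, map_pow, map_natCast] using map_dvd ev (hφ s)
    simpa using hlift.add (Int.prime_dvd_pow_self_sub hp (ev s))
  | succ e ih =>
    obtain ⟨v, hv⟩ := hφ s
    have hφs : φ s = s ^ p + p * v := by rw [← hv]; ring
    have key : ∀ n, ev (φ^[n + 1] s) = ev (φ^[n] s) ^ p + p * ev (φ^[n] v) := fun n => by
      rw [Function.iterate_succ_apply, hφs, ← RingHom.coe_pow, map_add, map_pow, map_mul,
        map_natCast, RingHom.coe_pow, map_add, map_pow, map_mul, map_natCast]
    have hsplit : ev (φ^[e + 2] s) - ev (φ^[e + 1] s) =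
        (ev (φ^[e + 1] s) ^ p - ev (φ^[e] s) ^ p) + p * (ev (φ^[e + 1] v) - ev (φ^[e] v)) := by
      linear_combination key (e + 1) - key e
    rw [hsplit]
    refine (pow_succ_dvd_pow_sub_pow e.succ_ne_zero (ih s)).add ?_
    rw [pow_succ']
    exact mul_dvd_mul_left _ (ih v)

namespace MvPolynomial

variable {σ R : Type*}

theorem IsSymmetric.expand [CommSemiring R] {f : MvPolynomial σ R} (hf : f.IsSymmetric) (p : ℕ) :
    (expand p f).IsSymmetric := fun e => by
  rw [rename_expand, hf e]

theorem expand_psum [Fintype σ] [CommSemiring R] (m n : ℕ) :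
    expand m (psum σ R n) = psum σ R (m * n) := by
  simp [psum, ← pow_mul]

theorem IsSymmetric.of_C_mul [CommRing R] [IsDomain R] {r : R} (hr : r ≠ 0)
    {f : MvPolynomial σ R} (h : (MvPolynomial.C r * f).IsSymmetric) : f.IsSymmetric := fun e =>
  mul_left_cancel₀ (MvPolynomial.C_ne_zero.2 hr) (by simpa only [map_mul, rename_C] using h e)

theorem natCast_dvd_expand_sub_pow {p : ℕ} (hp : p.Prime) (f : MvPolynomial σ ℤ) :
    (p : MvPolynomial σ ℤ) ∣ expand p f - f ^ p := by
  have := Fact.mk hp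
  rw [← map_natCast MvPolynomial.C, C_dvd_iff_map_hom_eq_zero (Int.castRingHom (ZMod p)) _
    fun r => ZMod.intCast_zmod_eq_zero_iff_dvd r p, map_sub, map_pow, map_expand, expand_zmod,
    sub_self]

variable (σ R) in
noncomputable def symmetricExpand [CommSemiring R] (p : ℕ) :
    symmetricSubalgebra σ R →ₐ[R] symmetricSubalgebra σ R :=
  ((expand p).comp (symmetricSubalgebra σ R).val).codRestrict _ fun f =>
    (mem_symmetricSubalgebra _).2 (((mem_symmetricSubalgebra _).1 f.2).expand p)

theorem coe_symmetricExpand_iterate [CommSemiring R] (p n : ℕ) (f : symmetricSubalgebra σ R) :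
    ((symmetricExpand σ R p)^[n] f : MvPolynomial σ R) = expand (p ^ n) (f : MvPolynomial σ R) := by
  induction n with
  | zero => simp
  | succ n ih =>
    rw [Function.iterate_succ_apply', pow_succ', expand_mul, ← ih]
    rfl

theorem natCast_dvd_symmetricExpand_sub_pow {p : ℕ} (hp : p.Prime) (f : symmetricSubalgebra σ ℤ) :
    (p : symmetricSubalgebra σ ℤ) ∣ symmetricExpand σ ℤ p f - f ^ p := by
  obtain ⟨u, hu⟩ := natCast_dvd_expand_sub_pow hp (f : MvPolynomial σ ℤ)
  have hsymm : (MvPolynomial.C (p : ℤ) * u).IsSymmetric := by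
    rw [map_natCast, ← hu]
    exact (symmetricExpand σ ℤ p f - f ^ p).2
  exact ⟨⟨u, hsymm.of_C_mul (by exact_mod_cast hp.ne_zero)⟩, Subtype.ext hu⟩

theorem pow_succ_dvd_psum_sub_psum [Fintype σ] (ev : symmetricSubalgebra σ ℤ →+* ℤ) {p : ℕ}
    (hp : p.Prime) (e c : ℕ) :
    (p : ℤ) ^ (e + 1) ∣ ev ⟨psum σ ℤ (p ^ (e + 1) * c), psum_isSymmetric σ ℤ _⟩ -
      ev ⟨psum σ ℤ (p ^ e * c), psum_isSymmetric σ ℤ _⟩ := by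
  have hiter : ∀ n, (symmetricExpand σ ℤ p).toRingHom^[n] ⟨psum σ ℤ c, psum_isSymmetric σ ℤ c⟩ =
      ⟨psum σ ℤ (p ^ n * c), psum_isSymmetric σ ℤ _⟩ := fun n =>
    Subtype.ext ((coe_symmetricExpand_iterate p n _).trans (expand_psum _ _))
  have := pow_succ_dvd_iterate_sub_iterate hp (symmetricExpand σ ℤ p).toRingHom
    (natCast_dvd_symmetricExpand_sub_pow hp) ev e ⟨psum σ ℤ c, psum_isSymmetric σ ℤ c⟩
  rwa [hiter, hiter] at this

theorem exists_algHom_symmetricSubalgebra_lift [Fintype σ] {S : Type*} [CommRing R] [CommRing S]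
    [Algebra R S] (x : σ → S)
    (hx : ∀ i : Fin (Fintype.card σ), ∃ r : R, aeval x (esymm σ R (i + 1)) = algebraMap R S r) :
    ∃ ev : symmetricSubalgebra σ R →ₐ[R] R,
      ∀ f, algebraMap R S (ev f) = aeval x (f : MvPolynomial σ R) := by
  choose c hc using hx
  refine ⟨(aeval c).comp (esymmAlgEquiv σ R rfl).symm.toAlgHom, fun f => ?_⟩
  obtain ⟨P, rfl⟩ := (esymmAlgEquiv σ R rfl).surjective f
  show algebraMap R S (aeval c ((esymmAlgEquiv σ R rfl).symm (esymmAlgEquiv σ R rfl P))) = _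
  rw [AlgEquiv.symm_apply_apply, esymmAlgEquiv_apply, esymmAlgHom_apply, comp_aeval_apply,
    ← aeval_algebraMap_apply]
  simp only [hc]
  rfl

theorem aeval_esymm_of_map_eq_prod [Fintype σ] {S : Type*} [CommRing R] [CommRing S] [Algebra R S]
    {q : R[X]} {x : σ → S} (hq : q.map (algebraMap R S) = ∏ i, (Polynomial.X - Polynomial.C (x i)))
    {j : ℕ} (hj : j ≤ Fintype.card σ) :
    aeval x (esymm σ R j) = algebraMap R S ((-1) ^ j * q.coeff (Fintype.card σ - j)) := by
  have hcard : Multiset.card (univ.val.map x) = Fintype.card σ := by simp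
  have hcoeff := Multiset.prod_X_sub_C_coeff (univ.val.map x) (k := Fintype.card σ - j) (by omega)
  simp only [Multiset.map_map, Function.comp_def, hcard, Nat.sub_sub_self hj] at hcoeff
  rw [aeval_esymm_eq_multiset_esymm, map_mul, map_pow, map_neg, map_one, ← Polynomial.coeff_map,
    hq, prod_eq_multiset_prod, hcoeff, ← mul_assoc, ← mul_pow]
  simp

end MvPolynomial

theorem Nat.Coprime.sum_divisors_mul_eq_sum_sum {M : Type*} [AddCommMonoid M] {m n : ℕ}
    (hmn : m.Coprime n) (f : ℕ → M) :
    ∑ d ∈ (m * n).divisors, f d = ∑ i ∈ m.divisors, ∑ j ∈ n.divisors, f (i * j) := by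
  rw [hmn.divisors_mul, sum_map]
  exact (sum_attach _ (fun x : ℕ × ℕ => f (x.1 * x.2))).trans (sum_product _ _ _)

theorem sum_divisors_prime_pow_mul_moebius {p : ℕ} (hp : p.Prime) (e : ℕ) (F : ℕ → ℤ) :
    ∑ i ∈ (p ^ (e + 1)).divisors, F i * μ (p ^ (e + 1) / i) = F (p ^ (e + 1)) - F (p ^ e) := by
  have hμ : ∀ j ≤ e + 1, μ (p ^ (e + 1) / p ^ j) = μ (p ^ (e + 1 - j)) := fun j hj => by
    rw [Nat.pow_div hj hp.pos]
  rw [Nat.sum_divisors_prime_pow hp, sum_range_succ, sum_range_succ, hμ _ le_rfl, hμ _ e.le_succ,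
    sum_eq_zero fun j hj => ?_]
  · simp [moebius_apply_prime hp, sub_eq_neg_add]
  · have hj : j < e := mem_range.1 hj
    rw [hμ _ (by omega), moebius_apply_prime_pow hp (by omega), if_neg (by omega), mul_zero]

theorem prime_pow_dvd_sum_divisors_mul_moebius {a : ℕ → ℤ}
    (ha : ∀ p e c : ℕ, p.Prime → (p : ℤ) ^ (e + 1) ∣ a (p ^ (e + 1) * c) - a (p ^ e * c))
    {p m : ℕ} (hp : p.Prime) (hpm : ¬ p ∣ m) (e : ℕ) :
    (p : ℤ) ^ e ∣ ∑ d ∈ (p ^ e * m).divisors, a d * μ (p ^ e * m / d) := by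
  obtain _ | e := e
  · simp
  have hcop : (p ^ (e + 1)).Coprime m := (hp.coprime_iff_not_dvd.2 hpm).pow_left _
  have hsplit : ∀ i ∈ (p ^ (e + 1)).divisors, ∀ j ∈ m.divisors,
      a (i * j) * μ (p ^ (e + 1) * m / (i * j)) =
        μ (m / j) * (a (i * j) * μ (p ^ (e + 1) / i)) := by
    intro i hi j hj
    have hi' := Nat.dvd_of_mem_divisors hi
    have hj' := Nat.dvd_of_mem_divisors hj
    have hcop' : (p ^ (e + 1) / i).Coprime (m / j) :=
      (hcop.coprime_dvd_left (Nat.div_dvd_of_dvd hi')).coprime_dvd_right (Nat.div_dvd_of_dvd hj')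
    rw [← Nat.div_mul_div_comm hi' hj', isMultiplicative_moebius.map_mul_of_coprime hcop']
    ring
  rw [hcop.sum_divisors_mul_eq_sum_sum, sum_congr rfl fun i hi => sum_congr rfl (hsplit i hi),
    sum_comm]
  simp_rw [← mul_sum]
  refine dvd_sum fun j _ => dvd_mul_of_dvd_right ?_ _
  rw [sum_divisors_prime_pow_mul_moebius hp e (fun i => a (i * j))]
  exact ha p e j hp

theorem dvd_sum_divisors_mul_moebius {a : ℕ → ℤ}
    (ha : ∀ p e c : ℕ, p.Prime → (p : ℤ) ^ (e + 1) ∣ a (p ^ (e + 1) * c) - a (p ^ e * c)) (n : ℕ) :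
    (n : ℤ) ∣ ∑ d ∈ n.divisors, a d * μ (n / d) := by
  rcases eq_or_ne n 0 with rfl | hn
  · simp
  rw [Int.natCast_dvd, Nat.dvd_iff_prime_pow_dvd_dvd]
  intro p k hp hpk
  rw [← Int.natCast_dvd, Nat.cast_pow]
  refine (pow_dvd_pow _ ((hp.pow_dvd_iff_le_factorization hn).1 hpk)).trans ?_
  have := prime_pow_dvd_sum_divisors_mul_moebius ha hp (Nat.not_dvd_ordCompl hp hn)
    (n.factorization p)
  rwa [Nat.ordProj_mul_ordCompl_eq_self] at this

theorem stmt_16_general (k : ℕ) (q : Polynomial ℤ)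
    (x : Fin k → ℂ)
    (hroots : q.map (Int.castRingHom ℂ) = ∏ i : Fin k, (X - C (x i))) :
    ∀ n : ℕ, n ≥ 1 → ∃ t : ℤ,
      ∑ d ∈ Nat.divisors n, (∑ i : Fin k, x i ^ d) * (μ (n / d) : ℂ) = (n : ℂ) * (t : ℂ) := by
  intro n _
  obtain ⟨ev, hev⟩ := MvPolynomial.exists_algHom_symmetricSubalgebra_lift (R := ℤ) x fun i =>
    ⟨_, MvPolynomial.aeval_esymm_of_map_eq_prod hroots i.isLt⟩
  set a : ℕ → ℤ := fun d => ev ⟨MvPolynomial.psum (Fin k) ℤ d, MvPolynomial.psum_isSymmetric _ _ d⟩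
  have ha : ∀ d, (a d : ℂ) = ∑ i, x i ^ d := fun d =>
    (hev _).trans (by simp [MvPolynomial.psum])
  obtain ⟨t, ht⟩ := dvd_sum_divisors_mul_moebius (a := a)
    (fun p e c hp => MvPolynomial.pow_succ_dvd_psum_sub_psum ev.toRingHom hp e c) n
  exact ⟨t, by simp_rw [← ha]; exact_mod_cast ht⟩

theorem stmt_16 (k : ℕ) (q : Polynomial ℤ) (hmonic : q.Monic) (hdeg : q.natDegree = k)
    (x : Fin k → ℂ)
    (hroots : q.map (Int.castRingHom ℂ) = ∏ i : Fin k, (X - C (x i))) :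
    ∀ n : ℕ, n ≥ 1 → ∃ t : ℤ,
      ∑ d ∈ Nat.divisors n, (∑ i : Fin k, x i ^ d) * (μ (n / d) : ℂ) = (n : ℂ) * (t : ℂ) :=
  stmt_16_general k q x hroots
end

section
/- Let 0 < R ≤ 1 and let f be an analytic function without zeros on the disk |z| < R with f(0) = 1 and f'(0) = 0, and let (α_n)_{n≥2} be complex numbers such that the partial products ∏_{n=2}^{N} (1−z^n)^{α_n} converge compactly to f on the disk |z| < R as N → ∞. Let m ≥ 1 be an integer with R·p_m > 1, where p_k denotes the k-th prime number (p_1 = 2). Then both infinite products below converge and ∏_{k=m}^{∞} f(1/p_k) = ∏_{n=2}^{∞} ζ_m(n)^{−α_n}, where ζ_m(s) = ∏_{k=m}^{∞} (1 − p_k^{−s})^{−1}. -/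
/-!
Fix `r` with `1 / p_m < r < R`. At `r` the logarithmic derivatives of the partial products are the
partial sums of `∑ₙ -n αₙ rⁿ⁻¹ / (1 - rⁿ)`, which converge to `f'(r) / f(r)`; hence these terms are
bounded and `αₙ = O(r⁻ⁿ)`. For `x_k = 1 / p_k ≤ 1 / p_m < r` the terms of the double series
`∑_{k ≥ m, n ≥ 2} αₙ log (1 - x_kⁿ)` are then `O(x_k² (x_k / r)ⁿ⁻²)`, so it converges absolutely.
Summing it over `n` first gives `∑_k log f(x_k)`, over `k` first gives `-∑ₙ αₙ log ζ_m(n)`, and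
exponentiating shows that both products tend to the exponential of the double sum.
-/

open Filter Topology Finset

@[to_additive]
theorem tendsto_prod_Icc_iff {M : Type*} [CommMonoid M] [TopologicalSpace M] (g : ℕ → M) (m : ℕ)
    {l : Filter M} :
    Tendsto (fun N => ∏ k ∈ Icc m N, g k) atTop l ↔
      Tendsto (fun N => ∏ j ∈ range N, g (m + j)) atTop l := by
  have h : ∀ N, ∏ k ∈ Icc m (N + m), g k = ∏ j ∈ range (N + 1), g (m + j) := fun N => by
    rw [← Finset.Ico_add_one_right_eq_Icc, prod_Ico_eq_prod_range]
    congr 2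
    omega
  rw [← tendsto_add_atTop_iff_nat m, ← tendsto_add_atTop_iff_nat 1 (f := fun N => ∏ j ∈ range N, _)]
  simp only [h]

theorem tendsto_zero_of_tendsto_sum_range {E : Type*} [AddCommGroup E] [TopologicalSpace E]
    [IsTopologicalAddGroup E] {c : ℕ → E} {s : E}
    (h : Tendsto (fun N => ∑ j ∈ range N, c j) atTop (𝓝 s)) : Tendsto c atTop (𝓝 0) := by
  simpa [sum_range_succ_sub_sum] using ((tendsto_add_atTop_iff_nat 1).2 h).sub h

theorem Complex.one_sub_pow_mem_slitPlane {z : ℂ} (hz : ‖z‖ < 1) {n : ℕ} (hn : n ≠ 0) :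
    1 - z ^ n ∈ Complex.slitPlane := by
  rw [sub_eq_add_neg]
  apply Complex.mem_slitPlane_of_norm_lt_one
  rw [norm_neg, norm_pow]
  exact pow_lt_one₀ (norm_nonneg z) hz hn

theorem hasDerivAt_one_sub_pow_cpow {z a : ℂ} {n : ℕ} (hz : 1 - z ^ n ∈ Complex.slitPlane) :
    HasDerivAt (fun w => (1 - w ^ n) ^ a) (a * (1 - z ^ n) ^ (a - 1) * -(n * z ^ (n - 1))) z :=
  ((hasDerivAt_pow n z).const_sub 1).cpow_const hz

theorem logDeriv_one_sub_pow_cpow {z a : ℂ} {n : ℕ} (hz : 1 - z ^ n ∈ Complex.slitPlane) :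
    logDeriv (fun w => (1 - w ^ n) ^ a) z = -(a * n * z ^ (n - 1)) / (1 - z ^ n) := by
  have hne := Complex.slitPlane_ne_zero hz
  have : (1 - z ^ n) ^ a ≠ 0 := Complex.cpow_ne_zero_iff.2 (.inl hne)
  rw [logDeriv_apply, (hasDerivAt_one_sub_pow_cpow hz).deriv, Complex.cpow_sub _ _ hne,
    Complex.cpow_one]
  field_simp

theorem tendsto_mul_pow_div_one_sub_pow_of_tendstoLocallyUniformlyOn {U : Set ℂ} (hU : IsOpen U)
    (hU1 : ∀ z ∈ U, ‖z‖ < 1) {α : ℕ → ℂ} {f : ℂ → ℂ}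
    (h : TendstoLocallyUniformlyOn (fun N z => ∏ n ∈ Icc 2 N, (1 - z ^ n) ^ α n) f atTop U)
    {z : ℂ} (hz : z ∈ U) (hfz : f z ≠ 0) :
    Tendsto (fun n => α n * n * z ^ (n - 1) / (1 - z ^ n)) atTop (𝓝 0) := by
  have hslit : ∀ w ∈ U, ∀ N, ∀ n ∈ Icc 2 N, 1 - w ^ n ∈ Complex.slitPlane := fun w hw N n hn =>
    Complex.one_sub_pow_mem_slitPlane (hU1 w hw) (by grind)
  have hdiff : ∀ w ∈ U, ∀ N, ∀ n ∈ Icc 2 N, DifferentiableAt ℂ (fun v => (1 - v ^ n) ^ α n) w :=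
    fun w hw N n hn => (hasDerivAt_one_sub_pow_cpow (hslit w hw N n hn)).differentiableAt
  have hlog (N : ℕ) : logDeriv (fun w => ∏ n ∈ Icc 2 N, (1 - w ^ n) ^ α n) z =
      ∑ n ∈ Icc 2 N, -(α n * n * z ^ (n - 1)) / (1 - z ^ n) := by
    rw [logDeriv_prod (f := fun n w => (1 - w ^ n) ^ α n)
      (fun n hn =>
        Complex.cpow_ne_zero_iff.2 (.inl (Complex.slitPlane_ne_zero (hslit z hz N n hn))))
      (hdiff z hz N)]
    exact sum_congr rfl fun n hn => logDeriv_one_sub_pow_cpow (hslit z hz N n hn)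
  have hdiffOn (N : ℕ) : DifferentiableOn ℂ (fun w => ∏ n ∈ Icc 2 N, (1 - w ^ n) ^ α n) U :=
    DifferentiableOn.fun_finsetProd fun n hn w hw => (hdiff w hw N n hn).differentiableWithinAt
  have hb := tendsto_zero_of_tendsto_sum_range <| (tendsto_sum_Icc_iff _ 2).1 <|
    (Complex.logDeriv_tendsto hU hz h (Eventually.of_forall hdiffOn) hfz).congr hlog
  rw [← tendsto_add_atTop_iff_nat 2]
  simpa [add_comm, neg_div] using hb.neg

theorem exists_norm_le_div_pow_of_tendsto {α : ℕ → ℂ} {r : ℝ} (hr : 0 < r) (hr1 : r < 1)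
    (h : Tendsto (fun n => α n * n * (r : ℂ) ^ (n - 1) / (1 - (r : ℂ) ^ n)) atTop (𝓝 0)) :
    ∃ C, ∀ n, ‖α (2 + n)‖ ≤ C / r ^ n := by
  set b : ℕ → ℂ := fun n => α n * n * (r : ℂ) ^ (n - 1) / (1 - (r : ℂ) ^ n)
  obtain ⟨B, hB⟩ := isBounded_iff_forall_norm_le.1 (Metric.isBounded_range_of_tendsto b h)
  refine ⟨B / r, fun n => ?_⟩
  have hrn : 0 < 1 - r ^ (2 + n) := sub_pos.2 (pow_lt_one₀ hr.le hr1 (by omega))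
  have hαb : α (2 + n) * ((2 + n : ℕ) * r ^ (n + 1) : ℝ) = b (2 + n) * (1 - r ^ (2 + n) : ℝ) := by
    have : (1 - r ^ (2 + n) : ℂ) ≠ 0 := by exact_mod_cast hrn.ne'
    simp only [b, show 2 + n - 1 = n + 1 by omega]
    push_cast
    field_simp
  have hnorm := congrArg norm hαb
  rw [norm_mul, norm_mul, Complex.norm_real, Complex.norm_real,
    Real.norm_of_nonneg (by positivity), Real.norm_of_nonneg hrn.le] at hnorm
  rw [div_div, ← pow_succ', le_div_iff₀ (by positivity)]
  calc ‖α (2 + n)‖ * r ^ (n + 1) ≤ ‖α (2 + n)‖ * ((2 + n : ℕ) * r ^ (n + 1)) :=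
        mul_le_mul_of_nonneg_left
          (le_mul_of_one_le_left (by positivity) (by norm_cast; omega)) (norm_nonneg _)
    _ = ‖b (2 + n)‖ * (1 - r ^ (2 + n)) := hnorm
    _ ≤ B * 1 := by
        gcongr
        · exact (norm_nonneg _).trans (hB _ ⟨2 + n, rfl⟩)
        · exact hB _ ⟨2 + n, rfl⟩
        · linarith [pow_pos hr (2 + n)]
    _ = B := mul_one B

theorem Real.abs_log_one_sub_le {t : ℝ} (ht : |t| ≤ 1 / 2) : |Real.log (1 - t)| ≤ 2 * |t| := by
  have h := Real.abs_log_sub_add_sum_range_le (ht.trans_lt one_half_lt_one) 0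
  simp only [range_zero, sum_empty, zero_add, pow_one] at h
  refine h.trans ?_
  rw [div_le_iff₀ (by linarith)]
  nlinarith [abs_nonneg t]

theorem summable_log_one_sub_pow_mul {x : ℕ → ℝ} {β : ℕ → ℂ} {ρ r C : ℝ}
    (hx0 : ∀ j, 0 ≤ x j) (hxρ : ∀ j, x j ≤ ρ) (hρ : ρ ≤ 1 / 2) (hρr : ρ < r)
    (hx : Summable fun j => x j ^ 2) (hβ : ∀ n, ‖β n‖ ≤ C / r ^ n) :
    Summable fun jn : ℕ × ℕ => (Real.log (1 - x jn.1 ^ (2 + jn.2)) : ℂ) * β jn.2 := by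
  have hρ0 : 0 ≤ ρ := (hx0 0).trans (hxρ 0)
  have hr : 0 < r := hρ0.trans_lt hρr
  have hC : 0 ≤ C := by simpa using (norm_nonneg _).trans (hβ 0)
  have hgeom := summable_geometric_of_lt_one (div_nonneg hρ0 hr.le) ((div_lt_one hr).2 hρr)
  have h2C : 0 ≤ 2 * C := by linarith
  refine Summable.of_norm_bounded ((hx.mul_left (2 * C)).mul_of_nonneg hgeom
    (fun j => mul_nonneg h2C (sq_nonneg _)) (fun n => pow_nonneg (div_nonneg hρ0 hr.le) n))
    fun ⟨j, n⟩ => ?_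
  have hxn : |x j ^ (2 + n)| ≤ 1 / 2 := by
    rw [abs_of_nonneg (pow_nonneg (hx0 j) _)]
    exact (pow_le_of_le_one (hx0 j) (by linarith [hxρ j]) (by omega)).trans
      ((hxρ j).trans hρ)
  calc ‖(Real.log (1 - x j ^ (2 + n)) : ℂ) * β n‖
      = |Real.log (1 - x j ^ (2 + n))| * ‖β n‖ := by
        rw [norm_mul, Complex.norm_real, Real.norm_eq_abs]
    _ ≤ 2 * x j ^ (2 + n) * (C / r ^ n) := by
        refine mul_le_mul ?_ (hβ n) (norm_nonneg _) (mul_nonneg zero_le_two (pow_nonneg (hx0 j) _))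
        simpa [abs_of_nonneg (pow_nonneg (hx0 j) _)] using Real.abs_log_one_sub_le hxn
    _ = 2 * C * x j ^ 2 * (x j / r) ^ n := by rw [pow_add, div_pow]; field_simp
    _ ≤ 2 * C * x j ^ 2 * (ρ / r) ^ n :=
        mul_le_mul_of_nonneg_left (pow_le_pow_left₀ (div_nonneg (hx0 j) hr.le)
          (div_le_div_of_nonneg_right (hxρ j) hr.le) n) (mul_nonneg h2C (sq_nonneg _))

theorem Complex.ofReal_cpow_eq_exp {t : ℝ} (ht : 0 < t) (a : ℂ) :
    (t : ℂ) ^ a = Complex.exp (Real.log t * a) := by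
  rw [Complex.cpow_def_of_ne_zero (Complex.ofReal_ne_zero.2 ht.ne'), Complex.ofReal_log ht.le]

theorem tendsto_prod_one_sub_pow_cpow_of_hasSum {x : ℝ} (hx : |x| < 1) {α : ℕ → ℂ} {s : ℂ}
    (h : HasSum (fun n => (Real.log (1 - x ^ (2 + n)) : ℂ) * α (2 + n)) s) :
    Tendsto (fun N => ∏ n ∈ Icc 2 N, (1 - (x : ℂ) ^ n) ^ α n) atTop (𝓝 (Complex.exp s)) := by
  rw [tendsto_prod_Icc_iff]
  convert h.cexp.tendsto_prod_nat using 3 with N n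
  have hpos : 0 < 1 - x ^ (2 + n) :=
    sub_pos.2 ((le_abs_self _).trans_lt
      (by rw [abs_pow]; exact pow_lt_one₀ (abs_nonneg x) hx (by omega)))
  rw [Function.comp_apply, ← Complex.ofReal_cpow_eq_exp hpos]
  push_cast
  rfl

theorem hasProd_inv_one_sub {ι : Type*} {y : ι → ℝ} (hy1 : ∀ j, y j < 1) (hy : Summable y) :
    HasProd (fun j => (1 - y j)⁻¹) (Real.exp (-∑' j, Real.log (1 - y j))) := by
  refine Real.hasProd_of_hasSum_log (fun j => inv_pos.2 (sub_pos.2 (hy1 j))) ?_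
  simpa [Real.log_inv, sub_eq_add_neg] using
    (Real.summable_log_one_add_of_summable hy.neg).hasSum.neg

theorem ofReal_tprod_inv_one_sub_cpow_neg {ι : Type*} {y : ι → ℝ} (hy1 : ∀ j, y j < 1)
    (hy : Summable y) (a : ℂ) :
    ((∏' j, (1 - y j)⁻¹ : ℝ) : ℂ) ^ (-a) = Complex.exp (∑' j, (Real.log (1 - y j) : ℂ) * a) := by
  rw [(hasProd_inv_one_sub hy1 hy).tprod_eq, Complex.ofReal_cpow_eq_exp (Real.exp_pos _),
    Real.log_exp, tsum_mul_right, ← Complex.ofReal_tsum]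
  push_cast
  ring_nf

theorem exists_tendsto_prod_apply_and_prod_tprod_cpow {R ρ : ℝ} (hR1 : R ≤ 1) {f : ℂ → ℂ}
    (hfne : ∀ z ∈ Metric.ball (0 : ℂ) R, f z ≠ 0) {α : ℕ → ℂ}
    (hα : TendstoLocallyUniformlyOn (fun N z => ∏ n ∈ Icc 2 N, (1 - z ^ n) ^ α n) f atTop
      (Metric.ball 0 R))
    {x : ℕ → ℝ} (hx0 : ∀ j, 0 ≤ x j) (hxρ : ∀ j, x j ≤ ρ) (hρ : ρ ≤ 1 / 2) (hρR : ρ < R)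
    (hx : Summable fun j => x j ^ 2) :
    ∃ L : ℂ, Tendsto (fun N => ∏ j ∈ range N, f (x j)) atTop (𝓝 L) ∧
      Tendsto (fun N => ∏ n ∈ range N, ((∏' j, (1 - x j ^ (2 + n))⁻¹ : ℝ) : ℂ) ^ (-α (2 + n)))
        atTop (𝓝 L) := by
  obtain ⟨r, hρr, hrR⟩ := exists_between hρR
  have hr : 0 < r := ((hx0 0).trans (hxρ 0)).trans_lt hρr
  have hball : ∀ z ∈ Metric.ball (0 : ℂ) R, ‖z‖ < 1 := fun z hz =>
    (mem_ball_zero_iff.1 hz).trans_le hR1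
  have hrU : (r : ℂ) ∈ Metric.ball (0 : ℂ) R := by
    rwa [mem_ball_zero_iff, Complex.norm_real, Real.norm_of_nonneg hr.le]
  obtain ⟨C, hC⟩ := exists_norm_le_div_pow_of_tendsto hr (hrR.trans_le hR1) <|
    tendsto_mul_pow_div_one_sub_pow_of_tendstoLocallyUniformlyOn Metric.isOpen_ball hball hα hrU
      (hfne _ hrU)
  set w : ℕ → ℕ → ℂ := fun j n => (Real.log (1 - x j ^ (2 + n)) : ℂ) * α (2 + n)
  have hw : Summable (Function.uncurry w) :=
    summable_log_one_sub_pow_mul (β := fun n => α (2 + n)) hx0 hxρ hρ hρr hx hC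
  refine ⟨Complex.exp (∑' j, ∑' n, w j n), ?_, ?_⟩
  · have hrow (j : ℕ) : f (x j) = Complex.exp (∑' n, w j n) := by
      have hxU : (x j : ℂ) ∈ Metric.ball (0 : ℂ) R := by
        rw [mem_ball_zero_iff, Complex.norm_real, Real.norm_of_nonneg (hx0 j)]
        exact ((hxρ j).trans_lt hρr).trans hrR
      have hx1 : |x j| < 1 := by simpa [Complex.norm_real] using hball _ hxU
      simpa using tendsto_nhds_unique (hα.tendsto_at hxU)
        (tendsto_prod_one_sub_pow_cpow_of_hasSum hx1 (hw.prod_factor j).hasSum)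
    simp only [hrow]
    exact hw.prod.hasSum.cexp.tendsto_prod_nat
  · have hcol (n : ℕ) :
        ((∏' j, (1 - x j ^ (2 + n))⁻¹ : ℝ) : ℂ) ^ (-α (2 + n)) = Complex.exp (∑' j, w j n) := by
      have hx1 (j : ℕ) : x j ≤ 1 := by linarith [hxρ j]
      refine ofReal_tprod_inv_one_sub_cpow_neg (fun j => ?_) ?_ (α (2 + n))
      · exact pow_lt_one₀ (hx0 j) ((hxρ j).trans_lt (by linarith)) (by omega)
      · exact hx.of_nonneg_of_le (fun j => pow_nonneg (hx0 j) _) fun j =>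
          pow_le_pow_of_le_one (hx0 j) (hx1 j) (by omega)
    rw [← hw.tsum_comm]
    simp only [hcol]
    exact hw.prod_symm.prod.hasSum.cexp.tendsto_prod_nat

theorem stmt_18_general (R : ℝ) (hR1 : R ≤ 1)
    (f : ℂ → ℂ)
    (hfne : ∀ z ∈ Metric.ball (0 : ℂ) R, f z ≠ 0)
    (α : ℕ → ℂ)
    (hα : ∀ K ⊆ Metric.ball (0 : ℂ) R, IsCompact K →
      TendstoUniformlyOn
        (fun N z => ∏ n ∈ Finset.Icc 2 N, (1 - z ^ n) ^ (α n)) f atTop K)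
    (p : ℕ → ℕ) (hp : ∀ k ≥ 1, p k = Nat.nth Nat.Prime (k - 1))
    (m : ℕ) (hm : 1 ≤ m) (hRp : 1 < R * p m)
    (ζm : ℕ → ℝ)
    (hζm : ∀ s : ℕ, ζm s = ∏' j : ℕ, (1 - (1 / (p (m + j) : ℝ)) ^ s)⁻¹) :
    ∃ L : ℂ,
      Tendsto (fun N => ∏ k ∈ Finset.Icc m N, f (1 / (p k : ℂ))) atTop (𝓝 L) ∧
      Tendsto (fun N => ∏ n ∈ Finset.Icc 2 N, ((ζm n : ℂ)) ^ (-(α n))) atTop (𝓝 L) := by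
  have hp_eq (j : ℕ) : p (m + j) = Nat.nth Nat.Prime (m - 1 + j) := by
    rw [hp _ (by omega)]; congr 1; omega
  have hpm : (2 : ℝ) ≤ p m := by
    rw [hp m hm]
    exact_mod_cast (Nat.prime_nth_prime _).two_le
  have hx_le (j : ℕ) : 1 / (p (m + j) : ℝ) ≤ 1 / p m := by
    refine one_div_le_one_div_of_le (by linarith) ?_
    rw [hp m hm, hp_eq]
    exact_mod_cast Nat.nth_monotone Nat.infinite_setOfPred_prime (by omega)
  have hx : Summable fun j => (1 / (p (m + j) : ℝ)) ^ 2 := by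
    refine ((Real.summable_one_div_nat_pow.2 one_lt_two).comp_injective
      ((Nat.nth_strictMono Nat.infinite_setOfPred_prime).injective.comp
        (add_right_injective (m - 1)))).congr fun j => ?_
    simp [hp_eq]
  obtain ⟨L, hf, hζ⟩ := exists_tendsto_prod_apply_and_prod_tprod_cpow hR1 hfne
    ((tendstoLocallyUniformlyOn_iff_forall_isCompact Metric.isOpen_ball).2 hα)
    (fun j => by positivity) hx_le (one_div_le_one_div_of_le two_pos hpm)
    (by rw [div_lt_iff₀ (by linarith)]; linarith) hx
  refine ⟨L, (tendsto_prod_Icc_iff _ m).2 ?_, (tendsto_prod_Icc_iff _ 2).2 ?_⟩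
  · simpa using hf
  · simpa [hζm] using hζ

theorem stmt_18 (R : ℝ) (hR0 : 0 < R) (hR1 : R ≤ 1)
    (f : ℂ → ℂ) (hf : AnalyticOnNhd ℂ f (Metric.ball (0 : ℂ) R))
    (hfne : ∀ z ∈ Metric.ball (0 : ℂ) R, f z ≠ 0)
    (hf0 : f 0 = 1) (hf'0 : deriv f 0 = 0)
    (α : ℕ → ℂ)
    (hα : ∀ K ⊆ Metric.ball (0 : ℂ) R, IsCompact K →
      TendstoUniformlyOn
        (fun N z => ∏ n ∈ Finset.Icc 2 N, (1 - z ^ n) ^ (α n)) f atTop K)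
    (p : ℕ → ℕ) (hp : ∀ k ≥ 1, p k = Nat.nth Nat.Prime (k - 1))
    (m : ℕ) (hm : 1 ≤ m) (hRp : 1 < R * p m)
    (ζm : ℕ → ℝ)
    (hζm : ∀ s : ℕ, ζm s = ∏' j : ℕ, (1 - (1 / (p (m + j) : ℝ)) ^ s)⁻¹) :
    ∃ L : ℂ,
      Tendsto (fun N => ∏ k ∈ Finset.Icc m N, f (1 / (p k : ℂ))) atTop (𝓝 L) ∧
      Tendsto (fun N => ∏ n ∈ Finset.Icc 2 N, ((ζm n : ℂ)) ^ (-(α n))) atTop (𝓝 L) :=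
  stmt_18_general R hR1 f hfne α hα p hp m hm hRp ζm hζm
end
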